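/- arXiv:1902.00947 — 4 statements merged into one kernel-verified Lean document; each statement's English description precedes it below -/
import Mathlib

section
/- Let f : ℝ^d → ℝ be convex and L-smooth with minimizer x⋆, and let x_{k+1} = x_k - (1/L) f'(x_k). Then for any b_k, d_k ≥ 0, setting d_{k+1} = d_k + 2L and b_{k+1} = b_k + 2 + d_k/L, the potential φ_k = d_k (f(x_k) - f(x⋆)) + b_k ‖f'(x_k)‖² + L² ‖x_k - x⋆‖² satisfies φ_{k+1} ≤ φ_k. -/
/-!
Everything follows from the interpolation inequality for convex `L`-smooth functions,
`f y + ⟪∇f y, x - y⟫ + ‖∇f x - ∇f y‖² / (2L) ≤ f x`, obtained by comparing the tangent plane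
at `y` with the quadratic upper bound at `x` at the point `x - (∇f x - ∇f y) / L`.
Applied to the pairs `(xₖ, xₖ₊₁)`, `(xₖ₊₁, xₖ)` and `(x⋆, xₖ)` it gives the sufficient decrease
`2L (f xₖ₊₁ - f xₖ) ≤ -‖∇f xₖ‖² - ‖∇f xₖ₊₁‖²`, the monotonicity `‖∇f xₖ₊₁‖ ≤ ‖∇f xₖ‖`, and
`L² ‖xₖ₊₁ - x⋆‖² ≤ L² ‖xₖ - x⋆‖² - 2L (f xₖ - f x⋆)`. The decrease of the potential is a
nonnegative combination of these three inequalities.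
-/

open Set AffineMap
open scoped RealInnerProductSpace

variable {F : Type*} [NormedAddCommGroup F] [InnerProductSpace ℝ F]

noncomputable def gradientStep (L : ℝ) (f' : F → F) (x : F) : F := x - (1 / L) • f' x

theorem sub_gradientStep (L : ℝ) (f' : F → F) (x : F) :
    x - gradientStep L f' x = (1 / L) • f' x :=
  sub_sub_cancel _ _

theorem gradientStep_sub (L : ℝ) (f' : F → F) (x y : F) :
    gradientStep L f' x - y = (x - y) - (1 / L) • f' x :=
  sub_right_comm _ _ _

variable [CompleteSpace F] {f : F → ℝ}

theorem IsLocalMin.hasGradientAt_eq_zero {g x : F} (hmin : IsLocalMin f x)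
    (h : HasGradientAt f g x) : g = 0 :=
  (InnerProductSpace.toDual ℝ F).map_eq_zero_iff.mp
    (hmin.hasFDerivAt_eq_zero (hasGradientAt_iff_hasFDerivAt.mp h))

theorem HasGradientAt.hasDerivAt_comp_lineMap {g x y : F} {t : ℝ}
    (h : HasGradientAt f g (lineMap x y t)) :
    HasDerivAt (f ∘ lineMap x y) ⟪g, y - x⟫ t := by
  simpa using (hasGradientAt_iff_hasFDerivAt.mp h).comp_hasDerivAt t hasDerivAt_lineMap

theorem ConvexOn.add_inner_le_of_hasGradientAt (hf : ConvexOn ℝ univ f) {g x : F}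
    (h : HasGradientAt f g x) (y : F) : f x + ⟪g, y - x⟫ ≤ f y := by
  have hline : ConvexOn ℝ univ (f ∘ lineMap (k := ℝ) x y) := hf.comp_affineMap _
  have hderiv : HasDerivAt (f ∘ lineMap x y) ⟪g, y - x⟫ (0 : ℝ) :=
    HasGradientAt.hasDerivAt_comp_lineMap (by rwa [lineMap_apply_zero])
  have hslope := hline.le_slope_of_hasDerivAt (mem_univ 0) (mem_univ 1) zero_lt_one hderiv
  simp only [slope_def_field, Function.comp_apply, lineMap_apply_zero, lineMap_apply_one,
    sub_zero, div_one] at hslope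
  linarith

variable {f' : F → F} {L : ℝ}

theorem le_add_inner_add_mul_sq_of_lipschitz_gradient (hgrad : ∀ x, HasGradientAt f (f' x) x)
    (hsmooth : ∀ x y, ‖f' x - f' y‖ ≤ L * ‖x - y‖) (x y : F) :
    f y ≤ f x + ⟪f' x, y - x⟫ + L / 2 * ‖y - x‖ ^ 2 := by
  set h : ℝ → ℝ := fun t ↦ f (lineMap x y t) - t * ⟪f' x, y - x⟫ - L / 2 * t ^ 2 * ‖y - x‖ ^ 2
  have hderiv (t : ℝ) :
      HasDerivAt h (⟪f' (lineMap x y t) - f' x, y - x⟫ - L * t * ‖y - x‖ ^ 2) t := by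
    have := ((HasGradientAt.hasDerivAt_comp_lineMap (x := x) (y := y) (hgrad _)).sub
      ((hasDerivAt_id t).mul_const ⟪f' x, y - x⟫)).sub
      (((hasDerivAt_pow 2 t).const_mul (L / 2)).mul_const (‖y - x‖ ^ 2))
    refine this.congr_deriv ?_
    simp only [inner_sub_left]
    ring
  have hderiv_le (t : ℝ) (ht : 0 ≤ t) :
      ⟪f' (lineMap x y t) - f' x, y - x⟫ ≤ L * t * ‖y - x‖ ^ 2 := calc
    _ ≤ ‖f' (lineMap x y t) - f' x‖ * ‖y - x‖ := real_inner_le_norm _ _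
    _ ≤ L * ‖lineMap x y t - x‖ * ‖y - x‖ := by gcongr; exact hsmooth _ _
    _ = L * t * ‖y - x‖ ^ 2 := by
      rw [← vsub_eq_sub, lineMap_vsub_left, vsub_eq_sub, norm_smul, Real.norm_of_nonneg ht]
      ring
  have hanti : AntitoneOn h (Ici 0) := by
    refine antitoneOn_of_hasDerivWithinAt_nonpos (convex_Ici 0)
      (fun t _ ↦ (hderiv t).continuousAt.continuousWithinAt)
      (fun t _ ↦ (hderiv t).hasDerivWithinAt) fun t ht ↦ ?_
    rw [interior_Ici] at ht
    linarith [hderiv_le t ht.le]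
  have h10 := hanti (mem_Ici.mpr le_rfl) (mem_Ici.mpr zero_le_one) zero_le_one
  simp only [h, lineMap_apply_zero, lineMap_apply_one] at h10
  linarith

theorem ConvexOn.add_inner_add_sq_div_le_of_lipschitz_gradient (hf : ConvexOn ℝ univ f)
    (hgrad : ∀ x, HasGradientAt f (f' x) x) (hsmooth : ∀ x y, ‖f' x - f' y‖ ≤ L * ‖x - y‖)
    (hL : 0 < L) (x y : F) :
    f y + ⟪f' y, x - y⟫ + ‖f' x - f' y‖ ^ 2 / (2 * L) ≤ f x := by
  set u := f' x - f' y with hu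
  set z := x - L⁻¹ • u with hz
  have hlower := hf.add_inner_le_of_hasGradientAt (hgrad y) z
  have hupper := le_add_inner_add_mul_sq_of_lipschitz_gradient hgrad hsmooth x z
  have hzy : ⟪f' y, z - y⟫ = ⟪f' y, x - y⟫ - L⁻¹ * ⟪f' y, u⟫ := by
    rw [show z - y = (x - y) - L⁻¹ • u by rw [hz]; abel, inner_sub_right, real_inner_smul_right]
  have hzx : ⟪f' x, z - x⟫ = -(L⁻¹ * ⟪f' x, u⟫) := by
    rw [show z - x = -(L⁻¹ • u) by rw [hz]; abel, inner_neg_right, real_inner_smul_right]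
  have hzx_norm : L / 2 * ‖z - x‖ ^ 2 = ‖u‖ ^ 2 / (2 * L) := by
    rw [show z - x = -(L⁻¹ • u) by rw [hz]; abel, norm_neg, norm_smul,
      Real.norm_of_nonneg (by positivity)]
    field_simp
  have hgap : L⁻¹ * ⟪f' x, u⟫ - L⁻¹ * ⟪f' y, u⟫ = 2 * (‖u‖ ^ 2 / (2 * L)) := by
    rw [← mul_sub, ← inner_sub_left, ← hu, real_inner_self_eq_norm_sq]
    field_simp
  linarith

theorem ConvexOn.sq_norm_sub_le_mul_inner_of_lipschitz_gradient (hf : ConvexOn ℝ univ f)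
    (hgrad : ∀ x, HasGradientAt f (f' x) x) (hsmooth : ∀ x y, ‖f' x - f' y‖ ≤ L * ‖x - y‖)
    (hL : 0 < L) (x y : F) :
    ‖f' x - f' y‖ ^ 2 ≤ L * ⟪f' x - f' y, x - y⟫ := by
  have hxy := hf.add_inner_add_sq_div_le_of_lipschitz_gradient hgrad hsmooth hL x y
  have hyx := hf.add_inner_add_sq_div_le_of_lipschitz_gradient hgrad hsmooth hL y x
  rw [norm_sub_rev, ← neg_sub x y, inner_neg_right] at hyx
  have hsum : ‖f' x - f' y‖ ^ 2 / (2 * L) + ‖f' x - f' y‖ ^ 2 / (2 * L)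
      ≤ ⟪f' x - f' y, x - y⟫ := by
    rw [inner_sub_left]
    linarith
  calc ‖f' x - f' y‖ ^ 2
      = L * (‖f' x - f' y‖ ^ 2 / (2 * L) + ‖f' x - f' y‖ ^ 2 / (2 * L)) := by field_simp; ring
    _ ≤ L * ⟪f' x - f' y, x - y⟫ := by gcongr

theorem ConvexOn.two_mul_apply_gradientStep_add_sq_norm_le (hf : ConvexOn ℝ univ f)
    (hgrad : ∀ x, HasGradientAt f (f' x) x) (hsmooth : ∀ x y, ‖f' x - f' y‖ ≤ L * ‖x - y‖)
    (hL : 0 < L) (x : F) :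
    2 * L * f (gradientStep L f' x) + ‖f' x‖ ^ 2 + ‖f' (gradientStep L f' x)‖ ^ 2
      ≤ 2 * L * f x := by
  have h := hf.add_inner_add_sq_div_le_of_lipschitz_gradient hgrad hsmooth hL x
    (gradientStep L f' x)
  rw [sub_gradientStep, real_inner_smul_right, norm_sub_sq_real, real_inner_comm] at h
  have h2L := mul_le_mul_of_nonneg_left h (by positivity : 0 ≤ 2 * L)
  field_simp at h2L
  linarith

theorem ConvexOn.norm_gradient_gradientStep_le (hf : ConvexOn ℝ univ f)
    (hgrad : ∀ x, HasGradientAt f (f' x) x) (hsmooth : ∀ x y, ‖f' x - f' y‖ ≤ L * ‖x - y‖)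
    (hL : 0 < L) (x : F) :
    ‖f' (gradientStep L f' x)‖ ≤ ‖f' x‖ := by
  have h := hf.sq_norm_sub_le_mul_inner_of_lipschitz_gradient hgrad hsmooth hL x
    (gradientStep L f' x)
  rw [sub_gradientStep, real_inner_smul_right, ← mul_assoc, mul_one_div_cancel hL.ne', one_mul,
    inner_sub_left, real_inner_self_eq_norm_sq, norm_sub_sq_real, real_inner_comm] at h
  have hsq : ‖f' (gradientStep L f' x)‖ ^ 2 ≤ ‖f' (gradientStep L f' x)‖ * ‖f' x‖ := by
    linarith [real_inner_le_norm (f' (gradientStep L f' x)) (f' x)]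
  nlinarith [norm_nonneg (f' x)]

theorem ConvexOn.sq_mul_sq_norm_gradientStep_sub_add_le (hf : ConvexOn ℝ univ f)
    (hgrad : ∀ x, HasGradientAt f (f' x) x) (hsmooth : ∀ x y, ‖f' x - f' y‖ ≤ L * ‖x - y‖)
    (hL : 0 < L) {xstar : F} (hstar : f' xstar = 0) (x : F) :
    L ^ 2 * ‖gradientStep L f' x - xstar‖ ^ 2 + 2 * L * (f x - f xstar)
      ≤ L ^ 2 * ‖x - xstar‖ ^ 2 := by
  have h := hf.add_inner_add_sq_div_le_of_lipschitz_gradient hgrad hsmooth hL xstar x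
  rw [hstar, zero_sub, norm_neg, ← neg_sub x xstar, inner_neg_right] at h
  rw [gradientStep_sub, norm_sub_sq_real, real_inner_smul_right, norm_smul,
    Real.norm_of_nonneg (by positivity), real_inner_comm]
  have h2L := mul_le_mul_of_nonneg_left h (by positivity : 0 ≤ 2 * L)
  field_simp at h2L ⊢
  linarith

/-- Potential decrease for gradient descent on an L-smooth convex function. -/
theorem gd_potential_decrease {d : ℕ} (L : ℝ) (hL : 0 < L)
    (f : EuclideanSpace ℝ (Fin d) → ℝ)
    (f' : EuclideanSpace ℝ (Fin d) → EuclideanSpace ℝ (Fin d))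
    (hgrad : ∀ x, HasGradientAt f (f' x) x)
    (hconv : ConvexOn ℝ Set.univ f)
    (hsmooth : ∀ x y, ‖f' x - f' y‖ ≤ L * ‖x - y‖)
    (xstar : EuclideanSpace ℝ (Fin d)) (hmin : ∀ y, f xstar ≤ f y)
    (bk dk : ℝ) (hbk : 0 ≤ bk) (hdk : 0 ≤ dk)
    (xk xk1 : EuclideanSpace ℝ (Fin d))
    (hstep : xk1 = xk - (1 / L) • f' xk) :
    (dk + 2 * L) * (f xk1 - f xstar) + (bk + 2 + dk / L) * ‖f' xk1‖ ^ 2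
        + L ^ 2 * ‖xk1 - xstar‖ ^ 2
      ≤ dk * (f xk - f xstar) + bk * ‖f' xk‖ ^ 2 + L ^ 2 * ‖xk - xstar‖ ^ 2 := by
  obtain rfl : xk1 = gradientStep L f' xk := hstep
  have hstar : f' xstar = 0 :=
    IsLocalMin.hasGradientAt_eq_zero (Filter.Eventually.of_forall hmin) (hgrad xstar)
  have hdecr := hconv.two_mul_apply_gradientStep_add_sq_norm_le hgrad hsmooth hL xk
  have hnorm : ‖f' (gradientStep L f' xk)‖ ^ 2 ≤ ‖f' xk‖ ^ 2 := by
    gcongr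
    exact hconv.norm_gradient_gradientStep_le hgrad hsmooth hL xk
  have hdist := hconv.sq_mul_sq_norm_gradientStep_sub_add_le hgrad hsmooth hL hstar xk
  obtain ⟨e, he, rfl⟩ : ∃ e, 0 ≤ e ∧ dk = e * L := ⟨dk / L, by positivity, by field_simp⟩
  rw [mul_div_cancel_right₀ _ hL.ne']
  linarith [mul_le_mul_of_nonneg_left hdecr he, mul_le_mul_of_nonneg_left hnorm he,
    mul_le_mul_of_nonneg_left hnorm hbk]
end

section
/- Consider stochastic gradient descent with Polyak–Ruppert-type averaging: x_{k+1} = x_k - δ_k G(x_k; i_k) and z_{k+1} = (1/(d_k+1)) x_{k+1} + (d_k/(d_k+1)) z_k, with d_{k+1} = d_k + 1. If f is L-smooth convex, the oracle is unbiased with E_i‖G(x_k;i) - f'(x_k)‖² ≤ σ², and 0 ≤ δ_k ≤ (1+√5)/(2L), then δ_k d_{k+1} L · E_{i_k}[f(z_{k+1}) - f⋆] + (L/2) E_{i_k}‖x_{k+1} - x⋆‖² ≤ δ_k d_k L (f(z_k) - f⋆) + (L/2)‖x_k - x⋆‖² + e_k σ², where e_k = (δ_k²/2) · L(1 + d_k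 + Lδ_k)/(1 + d_k). -/
/-!
Each sample moves `x_{k+1}` away from the gradient step `x_k - δ f'(x_k)` by `δ (f'(x_k) - G_i)`,
and `z_{k+1}` away from `m = (x_k - δ f'(x_k) + d_k z_k) / (d_k + 1)` by that amount divided by
`d_k + 1`. These deviations have mean zero, so the bias–variance identity for `‖x_{k+1} - x⋆‖²`
and the descent lemma for `f(z_{k+1})` reduce the claim to a deterministic inequality at `m`,
up to the variance terms, which add up to `e_k σ²`.

The deterministic inequality is the sum of the convexity bound `f m + ⟪f' m, z_k - m⟫ ≤ f z_k`
(weight `d_k`) and of the co-coercivity bounds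
`‖f' y - f' x‖² ≤ 2L (f y - f x - ⟪f' x, y - x⟫)` for the pairs `(m, x_k)` and `(x_k, x⋆)`.
The leftover is a multiple of `‖f' m - f' x_k + Lδ f' x_k‖² ≥ 0` plus
`δ ‖f' x_k‖² (Lδ + 1 - (Lδ)²) / 2`, which is nonnegative exactly when `Lδ` is at most the
golden ratio.
-/

open Finset

open scoped RealInnerProductSpace

theorem sq_le_add_one_of_le_goldenRatio {t : ℝ} (ht₀ : 0 ≤ t) (ht : t ≤ Real.goldenRatio) :
    t ^ 2 ≤ t + 1 := by
  have hfactor : t ^ 2 - t - 1 = (t - Real.goldenRatio) * (t - Real.goldenConj) := by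
    linear_combination (-Real.goldenRatio_mul_goldenConj) + t * Real.goldenRatio_add_goldenConj
  nlinarith [Real.goldenConj_neg]

section Averaging

variable {ι : Type*} [Fintype ι]

theorem sum_sub_eq_zero_of_inv_card_smul_sum_eq {V : Type*} [AddCommGroup V] [Module ℝ V]
    {u : ι → V} {ū : V} (h : (Fintype.card ι : ℝ)⁻¹ • ∑ i, u i = ū) : ∑ i, (u i - ū) = 0 := by
  rcases isEmpty_or_nonempty ι with hι | hι
  · simp
  rw [sum_sub_distrib, sum_const, card_univ, ← Nat.cast_smul_eq_nsmul ℝ, ← h, smul_smul,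
    mul_inv_cancel₀ (by positivity), one_smul, sub_self]

variable {E : Type*} [NormedAddCommGroup E] [InnerProductSpace ℝ E]

theorem inv_card_mul_sum_norm_sub_sq [Nonempty ι] {u : ι → E} {ū : E}
    (h : ∑ i, (u i - ū) = 0) (c : E) :
    (Fintype.card ι : ℝ)⁻¹ * ∑ i, ‖u i - c‖ ^ 2
      = ‖ū - c‖ ^ 2 + (Fintype.card ι : ℝ)⁻¹ * ∑ i, ‖u i - ū‖ ^ 2 := by
  have hsplit : ∀ i, ‖u i - c‖ ^ 2 = ‖u i - ū‖ ^ 2 + 2 * ⟪u i - ū, ū - c⟫ + ‖ū - c‖ ^ 2 := by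
    intro i
    rw [← norm_add_sq_real, sub_add_sub_cancel]
  simp only [hsplit, sum_add_distrib, ← mul_sum, ← sum_inner, h, inner_zero_left, sum_const,
    card_univ, nsmul_eq_mul]
  field_simp
  ring

end Averaging

section Gradient

variable {E : Type*} [NormedAddCommGroup E] [InnerProductSpace ℝ E] [CompleteSpace E]
  {f : E → ℝ} {f' : E → E} {L : ℝ}

theorem HasGradientAt.hasDerivAt_comp_add_smul {g x v : E} {t : ℝ}
    (hf : HasGradientAt f g (x + t • v)) :
    HasDerivAt (fun s : ℝ => f (x + s • v)) ⟪g, v⟫ t := by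
  have hline : HasDerivAt (fun s : ℝ => x + s • v) v t := by
    simpa using ((hasDerivAt_id t).smul_const v).const_add x
  simpa [Function.comp_def] using hf.hasFDerivAt.comp_hasDerivAt t hline

theorem ConvexOn.add_inner_sub_le_of_hasGradientAt (hconv : ConvexOn ℝ Set.univ f)
    (hgrad : ∀ x, HasGradientAt f (f' x) x) (x y : E) :
    f x + ⟪f' x, y - x⟫ ≤ f y := by
  set φ : ℝ → ℝ := fun s => f (x + s • (y - x))
  have hφ : ConvexOn ℝ Set.univ φ := by
    simpa [φ, Function.comp_def, AffineMap.lineMap_apply_module', add_comm]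
      using hconv.comp_affineMap (AffineMap.lineMap x y : ℝ →ᵃ[ℝ] E)
  have hφ' : HasDerivAt φ ⟪f' x, y - x⟫ 0 :=
    HasGradientAt.hasDerivAt_comp_add_smul (by simpa using hgrad x)
  have hslope := hφ.deriv_le_slope (Set.mem_univ 0) (Set.mem_univ 1) one_pos
    hφ'.differentiableAt
  rw [hφ'.deriv] at hslope
  simp only [φ, slope_def_field, one_smul, add_sub_cancel, zero_smul, add_zero, sub_zero,
    div_one] at hslope
  linarith

theorem le_add_inner_add_sq_of_lipschitz_gradient (hgrad : ∀ x, HasGradientAt f (f' x) x)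
    (hsmooth : ∀ x y, ‖f' x - f' y‖ ≤ L * ‖x - y‖) (x y : E) :
    f y ≤ f x + ⟪f' x, y - x⟫ + L / 2 * ‖y - x‖ ^ 2 := by
  set v := y - x
  -- `χ t` is the slack of the bound along `x + t • v`: it vanishes at `0` and increases.
  set χ : ℝ → ℝ := fun t => t * ⟪f' x, v⟫ + L / 2 * ‖v‖ ^ 2 * t ^ 2 - (f (x + t • v) - f x)
  have hχ' : ∀ t : ℝ,
      HasDerivAt χ (⟪f' x, v⟫ + L / 2 * ‖v‖ ^ 2 * (2 * t) - ⟪f' (x + t • v), v⟫) t := by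
    intro t
    have hlin : HasDerivAt (fun s : ℝ => s * ⟪f' x, v⟫) ⟪f' x, v⟫ t := by
      simpa using hasDerivAt_mul_const ⟪f' x, v⟫
    have hquad : HasDerivAt (fun s : ℝ => L / 2 * ‖v‖ ^ 2 * s ^ 2)
        (L / 2 * ‖v‖ ^ 2 * (2 * t)) t :=
      ((hasDerivAt_pow 2 t).const_mul _).congr_deriv (by ring)
    exact (hlin.add hquad).sub ((hgrad _).hasDerivAt_comp_add_smul.sub_const (f x))
  have hmono : MonotoneOn χ (Set.Ici 0) := by
    refine monotoneOn_of_hasDerivWithinAt_nonneg (convex_Ici 0)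
      (fun t _ => (hχ' t).continuousAt.continuousWithinAt)
      (fun t _ => (hχ' t).hasDerivWithinAt) fun t ht => ?_
    rw [interior_Ici, Set.mem_Ioi] at ht
    have hlip : ⟪f' (x + t • v) - f' x, v⟫ ≤ L * t * ‖v‖ ^ 2 :=
      calc ⟪f' (x + t • v) - f' x, v⟫ ≤ ‖f' (x + t • v) - f' x‖ * ‖v‖ := real_inner_le_norm _ _
        _ ≤ L * ‖x + t • v - x‖ * ‖v‖ := by gcongr; exact hsmooth _ _
        _ = L * t * ‖v‖ ^ 2 := by
          rw [add_sub_cancel_left, norm_smul, Real.norm_of_nonneg ht.le]; ring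
    rw [inner_sub_left] at hlip
    linarith
  have h01 := hmono (Set.mem_Ici.2 le_rfl) (Set.mem_Ici.2 zero_le_one) zero_le_one
  simp only [χ, v, zero_mul, zero_smul, add_zero, sub_self, one_mul, one_smul,
    add_sub_cancel] at h01
  linarith

theorem ConvexOn.sq_norm_sub_gradient_le (hconv : ConvexOn ℝ Set.univ f) (hL : 0 < L)
    (hgrad : ∀ x, HasGradientAt f (f' x) x) (hsmooth : ∀ x y, ‖f' x - f' y‖ ≤ L * ‖x - y‖)
    (x y : E) :
    ‖f' x - f' y‖ ^ 2 ≤ 2 * L * (f y - f x - ⟪f' x, y - x⟫) := by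
  set w := f' y - f' x
  -- Compare `f` at `z` from below at `x` (convexity) and from above at `y` (smoothness).
  set z := y - L⁻¹ • w
  have hlow := hconv.add_inner_sub_le_of_hasGradientAt hgrad x z
  have hup := le_add_inner_add_sq_of_lipschitz_gradient hgrad hsmooth y z
  have hzx : z - x = (y - x) - L⁻¹ • w := by simp only [z]; abel
  have hzy : z - y = -(L⁻¹ • w) := by simp only [z]; abel
  rw [hzx, inner_sub_right, real_inner_smul_right] at hlow
  rw [hzy, inner_neg_right, real_inner_smul_right, norm_neg, norm_smul, Real.norm_of_nonneg
    (inv_nonneg.2 hL.le)] at hup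
  have hw : ⟪f' y, w⟫ - ⟪f' x, w⟫ = ‖w‖ ^ 2 := by
    rw [← inner_sub_left, real_inner_self_eq_norm_sq]
  have hquad : L / 2 * (L⁻¹ * ‖w‖) ^ 2 = L⁻¹ * ‖w‖ ^ 2 / 2 := by field_simp
  have hgap : L⁻¹ * ‖w‖ ^ 2 / 2 ≤ f y - f x - ⟪f' x, y - x⟫ := by
    linear_combination hlow + hup - L⁻¹ * hw + hquad
  rw [norm_sub_rev]
  calc ‖w‖ ^ 2 = 2 * L * (L⁻¹ * ‖w‖ ^ 2 / 2) := by field_simp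
    _ ≤ 2 * L * (f y - f x - ⟪f' x, y - x⟫) := by gcongr

theorem inv_card_mul_sum_le_of_lipschitz_gradient {ι : Type*} [Fintype ι] [Nonempty ι]
    (hgrad : ∀ x, HasGradientAt f (f' x) x) (hsmooth : ∀ x y, ‖f' x - f' y‖ ≤ L * ‖x - y‖)
    {u : ι → E} {ū : E} (h : ∑ i, (u i - ū) = 0) :
    (Fintype.card ι : ℝ)⁻¹ * ∑ i, f (u i)
      ≤ f ū + L / 2 * ((Fintype.card ι : ℝ)⁻¹ * ∑ i, ‖u i - ū‖ ^ 2) := by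
  have hsum : ∑ i, f (u i) ≤ ∑ i, (f ū + ⟪f' ū, u i - ū⟫ + L / 2 * ‖u i - ū‖ ^ 2) :=
    sum_le_sum fun i _ => le_add_inner_add_sq_of_lipschitz_gradient hgrad hsmooth ū (u i)
  simp only [sum_add_distrib, ← inner_sum, h, inner_zero_right, ← mul_sum, sum_const,
    card_univ, nsmul_eq_mul, add_zero] at hsum
  calc (Fintype.card ι : ℝ)⁻¹ * ∑ i, f (u i)
      ≤ (Fintype.card ι : ℝ)⁻¹ * (Fintype.card ι * f ū + L / 2 * ∑ i, ‖u i - ū‖ ^ 2) := by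
        gcongr
    _ = _ := by field_simp

theorem averaged_gradient_step_potential_le (hconv : ConvexOn ℝ Set.univ f) (hL : 0 < L)
    (hgrad : ∀ x, HasGradientAt f (f' x) x) (hsmooth : ∀ x y, ‖f' x - f' y‖ ≤ L * ‖x - y‖)
    {xstar : E} (hstar : f' xstar = 0) {δ p : ℝ} (hδ : 0 ≤ δ) (hLδ : (L * δ) ^ 2 ≤ L * δ + 1)
    (hp : 0 ≤ p) {x z m : E} (hm : (p + 1) • m = x - δ • f' x + p • z) :
    δ * (p + 1) * L * (f m - f xstar) + L / 2 * ‖x - xstar - δ • f' x‖ ^ 2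
      ≤ δ * p * L * (f z - f xstar) + L / 2 * ‖x - xstar‖ ^ 2 := by
  have hz := hconv.add_inner_sub_le_of_hasGradientAt hgrad m z
  have hx := hconv.sq_norm_sub_gradient_le hL hgrad hsmooth m x
  have hxstar := hconv.sq_norm_sub_gradient_le hL hgrad hsmooth x xstar
  rw [hstar, sub_zero] at hxstar
  have hdir : p • (z - m) + (x - m) = δ • f' x := by
    linear_combination (norm := module) -hm
  have hinner : p * ⟪f' m, z - m⟫ + ⟪f' m, x - m⟫ = δ * ⟪f' m, f' x⟫ := by
    rw [← real_inner_smul_right, ← inner_add_right, hdir, real_inner_smul_right]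
  have hstep : ‖x - xstar - δ • f' x‖ ^ 2
      = ‖x - xstar‖ ^ 2 + 2 * δ * ⟪f' x, xstar - x⟫ + δ ^ 2 * ‖f' x‖ ^ 2 := by
    rw [norm_sub_sq_real, real_inner_smul_right, norm_smul, Real.norm_eq_abs, mul_pow, sq_abs,
      real_inner_comm, ← neg_sub xstar x, inner_neg_right]
    ring
  have hsq : 0 ≤ ‖(f' m - f' x) + (L * δ) • f' x‖ ^ 2 := sq_nonneg _
  rw [norm_add_sq_real, real_inner_smul_right, norm_smul, Real.norm_eq_abs, mul_pow, sq_abs,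
    inner_sub_left, real_inner_self_eq_norm_sq] at hsq
  have hgold : 0 ≤ δ * ‖f' x‖ ^ 2 * (L * δ + 1 - (L * δ) ^ 2) :=
    mul_nonneg (by positivity) (sub_nonneg.2 hLδ)
  rw [hstep]
  linear_combination δ * p * L * hz + δ / 2 * hx + δ / 2 * hxstar - δ * L * hinner + δ / 2 * hsq
    + hgold / 2

end Gradient

/-- One-step potential inequality for SGD with Polyak–Ruppert-type averaging. -/
theorem sgd_averaging_potential_decrease {d n : ℕ} (hn : 0 < n) (L σ : ℝ) (hL : 0 < L)
    (f : EuclideanSpace ℝ (Fin d) → ℝ)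
    (f' : EuclideanSpace ℝ (Fin d) → EuclideanSpace ℝ (Fin d))
    (hgrad : ∀ x, HasGradientAt f (f' x) x)
    (hconv : ConvexOn ℝ Set.univ f)
    (hsmooth : ∀ x y, ‖f' x - f' y‖ ≤ L * ‖x - y‖)
    (xstar : EuclideanSpace ℝ (Fin d)) (hmin : ∀ y, f xstar ≤ f y)
    (δ dk : ℝ) (hδ0 : 0 ≤ δ) (hδ1 : δ ≤ (1 + Real.sqrt 5) / (2 * L)) (hdk : 0 ≤ dk)
    (xk zk : EuclideanSpace ℝ (Fin d)) (G : Fin n → EuclideanSpace ℝ (Fin d))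
    (hunbiased : (n : ℝ)⁻¹ • (∑ i, G i) = f' xk)
    (hvar : (n : ℝ)⁻¹ * (∑ i, ‖G i - f' xk‖ ^ 2) ≤ σ ^ 2)
    (x1 z1 : Fin n → EuclideanSpace ℝ (Fin d))
    (hx1 : ∀ i, x1 i = xk - δ • G i)
    (hz1 : ∀ i, z1 i = (1 / (dk + 1)) • x1 i + (dk / (dk + 1)) • zk) :
    δ * (dk + 1) * L * ((n : ℝ)⁻¹ * ∑ i, (f (z1 i) - f xstar))
        + L / 2 * ((n : ℝ)⁻¹ * ∑ i, ‖x1 i - xstar‖ ^ 2)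
      ≤ δ * dk * L * (f zk - f xstar) + L / 2 * ‖xk - xstar‖ ^ 2
        + (δ ^ 2 / 2 * (L * (1 + dk + L * δ) / (1 + dk))) * σ ^ 2 := by
  have : Nonempty (Fin n) := Fin.pos_iff_nonempty.mp hn
  have hstar : f' xstar = 0 := by
    simpa using IsLocalMin.hasFDerivAt_eq_zero (Filter.Eventually.of_forall hmin)
      (hgrad xstar).hasFDerivAt
  have hLδ : (L * δ) ^ 2 ≤ L * δ + 1 := by
    refine sq_le_add_one_of_le_goldenRatio (by positivity) ?_
    rw [le_div_iff₀ (by positivity)] at hδ1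
    rw [Real.goldenRatio, le_div_iff₀ two_pos]
    linarith
  set V := (n : ℝ)⁻¹ * ∑ i, ‖G i - f' xk‖ ^ 2
  set m := (dk + 1)⁻¹ • (xk - δ • f' xk + dk • zk)
  have hm : (dk + 1) • m = xk - δ • f' xk + dk • zk := smul_inv_smul₀ (by positivity) _
  have hG : ∑ i, (f' xk - G i) = 0 := by
    rw [← neg_eq_zero, ← sum_neg_distrib]
    simpa using sum_sub_eq_zero_of_inv_card_smul_sum_eq (u := G) (by simpa using hunbiased)
  have hxdev : ∀ i, x1 i - (xk - δ • f' xk) = δ • (f' xk - G i) := fun i => by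
    rw [hx1 i]; module
  have hzdev : ∀ i, z1 i - m = ((dk + 1)⁻¹ * δ) • (f' xk - G i) := fun i => by
    rw [hz1 i, hx1 i]; module
  have hX := inv_card_mul_sum_norm_sub_sq (u := x1) (ū := xk - δ • f' xk)
    (by simp only [hxdev, ← smul_sum, hG, smul_zero]) xstar
  have hZ := inv_card_mul_sum_le_of_lipschitz_gradient hgrad hsmooth (u := z1) (ū := m)
    (by simp only [hzdev, ← smul_sum, hG, smul_zero])
  simp only [hxdev, hzdev, norm_smul, mul_pow, Real.norm_eq_abs, sq_abs, norm_sub_rev (f' xk),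
    ← mul_sum, Fintype.card_fin] at hX hZ
  rw [sub_right_comm xk] at hX
  have hB := averaged_gradient_step_potential_le hconv hL hgrad hsmooth hstar hδ0 hLδ hdk hm
  have he : δ * (dk + 1) * L * (L / 2 * ((dk + 1)⁻¹ * δ) ^ 2) + L / 2 * δ ^ 2
      = δ ^ 2 / 2 * (L * (1 + dk + L * δ) / (1 + dk)) := by
    field_simp; ring
  rw [sum_sub_distrib, sum_const, card_univ, Fintype.card_fin, nsmul_eq_mul, mul_sub,
    inv_mul_cancel_left₀ (by positivity)]
  linear_combination δ * (dk + 1) * L * hZ + L / 2 * hX + hB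
    + (δ ^ 2 / 2 * (L * (1 + dk + L * δ) / (1 + dk))) * hvar + V * he
end

section
/- Under the weak growth condition with constant ρ, the scheme y_{k+1} = (k/(k+2)) y_k + (2/(k+2)) x_k, x_{k+1} = x_k - (1/(2ρL)) G(y_{k+1}; i_k) satisfies E[f(y_k)] - f⋆ ≤ 2ρL‖x_0 - x⋆‖²/k for all k ≥ 1. -/
/-!
The potential `Φ_k = k (f(y_k) - f⋆) + 2ρL‖x_k - x⋆‖²` is a supermartingale. Given the past,
the index `i_k` is uniform, so averaging over it turns `G(y_{k+1}; i_k)` into `∇f(y_{k+1})` in the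
cross term of `‖x_{k+1} - x⋆‖²` and bounds the quadratic term by `2ρL (f(y_{k+1}) - f⋆)` (weak
growth); the cross term is then controlled by two gradient inequalities at `y_{k+1}`, against `y_k`
and against `x⋆`, because `x_k - y_{k+1} = (k/2)(y_{k+1} - y_k)`. Hence `E Φ_N ≤ Φ_0`, which is the
claim after dropping the distance term.
-/

open Finset RealInnerProductSpace Function

theorem Fintype.sum_sum_update {ι α M : Type*} [DecidableEq ι] [Fintype ι] [Fintype α]
    [AddCommMonoid M] (F : (ι → α) → M) (k : ι) :
    ∑ ω, ∑ j, F (update ω k j) = Fintype.card α • ∑ ω, F ω := by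
  have hswap : Involutive fun p : (ι → α) × α => (update p.1 k p.2, p.1 k) :=
    fun p => Prod.ext (by simp) (by simp)
  calc ∑ ω, ∑ j, F (update ω k j)
      = ∑ p : (ι → α) × α, F (update p.1 k p.2) :=
        (Fintype.sum_prod_type (fun p : (ι → α) × α => F (update p.1 k p.2))).symm
    _ = ∑ p : (ι → α) × α, F p.1 := Fintype.sum_bijective _ hswap.bijective _ _ fun _ => rfl
    _ = Fintype.card α • ∑ ω, F ω := by
      rw [Fintype.sum_prod_type, smul_sum]; simp

/-- `ω` lists the sampled indices `i_0, …, i_{N-1}`; expectations are averages over all `ω`. -/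
def IsStochasticIteration {α β : Type*} {N : ℕ} (T : ℕ → β → α → β)
    (u : (Fin N → α) → ℕ → β) : Prop :=
  ∀ ω (k : Fin N), u ω (k + 1) = T k (u ω k) (ω k)

namespace IsStochasticIteration

variable {α β : Type*} {N : ℕ} {T : ℕ → β → α → β} {u : (Fin N → α) → ℕ → β}

theorem eq_of_forall_lt_eq (hu : IsStochasticIteration T u) (h0 : ∀ ω ω', u ω 0 = u ω' 0)
    {m : ℕ} (hm : m ≤ N) {ω ω' : Fin N → α} (h : ∀ i : Fin N, (i : ℕ) < m → ω i = ω' i) :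
    u ω m = u ω' m := by
  induction m with
  | zero => exact h0 ω ω'
  | succ m ih =>
    have hmN : m < N := hm
    rw [hu ω ⟨m, hmN⟩, hu ω' ⟨m, hmN⟩, ih hmN.le fun i hi => h i (by omega),
      h ⟨m, hmN⟩ (by simp)]

/-- The tower property: `u ω k` does not depend on `ω k`, which is uniform given the past. -/
theorem sum_sum_step [Fintype α] {M : Type*} [AddCommMonoid M] (hu : IsStochasticIteration T u)
    (h0 : ∀ ω ω', u ω 0 = u ω' 0) (k : Fin N) (F : β → M) :
    ∑ ω, ∑ j, F (T k (u ω k) j) = Fintype.card α • ∑ ω, F (u ω (k + 1)) := by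
  have hupdate : ∀ ω j, u (update ω k j) (k + 1) = T k (u ω k) j := fun ω j => by
    rw [hu, update_self,
      hu.eq_of_forall_lt_eq h0 k.is_le' fun i hi => update_of_ne (Fin.ne_of_lt hi) _ _]
  simp_rw [← hupdate]
  exact Fintype.sum_sum_update (fun ω => F (u ω (k + 1))) k

theorem sum_potential_le_initial [Fintype α] [Nonempty α] (hu : IsStochasticIteration T u)
    (h0 : ∀ ω ω', u ω 0 = u ω' 0) (V : ℕ → β → ℝ)
    (hV : ∀ k < N, ∀ s, (Fintype.card α : ℝ)⁻¹ * ∑ j, V (k + 1) (T k s j) ≤ V k s) :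
    ∑ ω, V N (u ω N) ≤ ∑ ω, V 0 (u ω 0) := by
  have hcard : (0 : ℝ) < Fintype.card α := by exact_mod_cast Fintype.card_pos
  have hdecrease : ∀ k : Fin N, ∑ ω, V (k + 1) (u ω (k + 1)) ≤ ∑ ω, V k (u ω k) := fun k => by
    refine le_of_mul_le_mul_left ?_ hcard
    calc (Fintype.card α : ℝ) * ∑ ω, V (k + 1) (u ω (k + 1))
        = ∑ ω, ∑ j, V (k + 1) (T k (u ω k) j) := by
          rw [hu.sum_sum_step h0, nsmul_eq_mul]
      _ ≤ ∑ ω, (Fintype.card α : ℝ) * V k (u ω k) := sum_le_sum fun ω _ =>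
          (inv_mul_le_iff₀ hcard).1 (hV k k.is_lt _)
      _ = (Fintype.card α : ℝ) * ∑ ω, V k (u ω k) := (mul_sum _ _ _).symm
  suffices ∀ m ≤ N, ∑ ω, V m (u ω m) ≤ ∑ ω, V 0 (u ω 0) from this N le_rfl
  intro m hm
  induction m with
  | zero => exact le_rfl
  | succ m ih => exact (hdecrease ⟨m, hm⟩).trans (ih (by omega))

end IsStochasticIteration

variable {E : Type*} [NormedAddCommGroup E] [InnerProductSpace ℝ E]

theorem ConvexOn.sub_le_inner_gradient [CompleteSpace E] {f : E → ℝ} {g z : E}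
    (hf : ConvexOn ℝ Set.univ f) (hg : HasGradientAt f g z) (w : E) :
    f z - f w ≤ ⟪g, z - w⟫ := by
  let line : ℝ →ᵃ[ℝ] E := AffineMap.lineMap z w
  have hline : ConvexOn ℝ Set.univ (f ∘ line) := hf.comp_affineMap line
  have hderiv : HasDerivAt (f ∘ line) ⟪g, w - z⟫ 0 := by
    have := hg.hasFDerivAt.comp_hasDerivAt_of_eq (0 : ℝ) AffineMap.hasDerivAt_lineMap
      (AffineMap.lineMap_apply_zero z w).symm
    simpa [InnerProductSpace.toDual_apply_apply] using this
  have hslope := hline.le_slope_of_hasDerivAt (Set.mem_univ 0) (Set.mem_univ 1) zero_lt_one hderiv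
  rw [← neg_sub z w, inner_neg_right] at hslope
  simp only [slope_def_field, comp_apply, line, AffineMap.lineMap_apply_one,
    AffineMap.lineMap_apply_zero, sub_zero, div_one] at hslope
  linarith

theorem average_norm_sub_smul_sq {ι : Type*} [Fintype ι] [Nonempty ι] (a m : E) {v : ι → E}
    (hv : (Fintype.card ι : ℝ)⁻¹ • ∑ j, v j = m) (δ : ℝ) :
    (Fintype.card ι : ℝ)⁻¹ * ∑ j, ‖a - δ • v j‖ ^ 2
      = ‖a‖ ^ 2 - 2 * δ * ⟪m, a⟫ + δ ^ 2 * ((Fintype.card ι : ℝ)⁻¹ * ∑ j, ‖v j‖ ^ 2) := by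
  have hcard : (Fintype.card ι : ℝ) ≠ 0 := by exact_mod_cast Fintype.card_ne_zero
  rw [← hv]
  simp only [norm_sub_sq_real, inner_smul_right, norm_smul, mul_pow, Real.norm_eq_abs, sq_abs,
    sum_add_distrib, sum_sub_distrib, ← mul_sum, ← inner_sum, sum_const, card_univ, nsmul_eq_mul,
    real_inner_comm a]
  field_simp

noncomputable def averagingPoint (k : ℕ) (y x : E) : E :=
  ((k : ℝ) / ((k : ℝ) + 2)) • y + (2 / ((k : ℝ) + 2)) • x

theorem ConvexOn.le_inner_gradient_averagingPoint [CompleteSpace E] {f : E → ℝ} {g : E}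
    (hf : ConvexOn ℝ Set.univ f) {k : ℕ} {x y : E} (hg : HasGradientAt f g (averagingPoint k y x))
    (w : E) :
    k / 2 * (f (averagingPoint k y x) - f y) + (f (averagingPoint k y x) - f w) ≤ ⟪g, x - w⟫ := by
  set z := averagingPoint k y x
  have hsplit : x - w = ((k : ℝ) / 2) • (z - y) + (z - w) := by
    simp only [z, averagingPoint]; match_scalars <;> field_simp; ring
  have hy := mul_le_mul_of_nonneg_left (hf.sub_le_inner_gradient hg y)
    (by positivity : (0 : ℝ) ≤ k / 2)
  rw [hsplit, inner_add_right, real_inner_smul_right]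
  linarith [hf.sub_le_inner_gradient hg w]

section PrimalAveraging

variable {ι : Type*} [Fintype ι]

noncomputable def primalAveragingStep (G : E → ι → E) (c : ℝ) (k : ℕ) (s : E × E) (j : ι) :
    E × E :=
  (s.1 - (1 / c) • G (averagingPoint k s.2 s.1) j, averagingPoint k s.2 s.1)

def primalAveragingPotential (f : E → ℝ) (xstar : E) (c : ℝ) (k : ℕ) (s : E × E) : ℝ :=
  k * (f s.2 - f xstar) + c * ‖s.1 - xstar‖ ^ 2

theorem primalAveragingPotential_step [CompleteSpace E] [Nonempty ι] {f : E → ℝ} {f' : E → E}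
    (hgrad : ∀ x, HasGradientAt f (f' x) x) (hconv : ConvexOn ℝ Set.univ f) {G : E → ι → E}
    (hunbiased : ∀ x, (Fintype.card ι : ℝ)⁻¹ • ∑ j, G x j = f' x) {c : ℝ} (hc : 0 < c)
    {xstar : E}
    (hwg : ∀ x, (Fintype.card ι : ℝ)⁻¹ * ∑ j, ‖G x j‖ ^ 2 ≤ c * (f x - f xstar))
    (k : ℕ) (s : E × E) :
    (Fintype.card ι : ℝ)⁻¹ * ∑ j, primalAveragingPotential f xstar c (k + 1)
        (primalAveragingStep G c k s j)
      ≤ primalAveragingPotential f xstar c k s := by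
  obtain ⟨x, y⟩ := s
  set z := averagingPoint k y x
  have hmean : (Fintype.card ι : ℝ)⁻¹ * ∑ j, primalAveragingPotential f xstar c (k + 1)
        (primalAveragingStep G c k (x, y) j)
      = (k + 1) * (f z - f xstar)
        + c * ((Fintype.card ι : ℝ)⁻¹ * ∑ j, ‖(x - xstar) - (1 / c) • G z j‖ ^ 2) := by
    simp only [primalAveragingPotential, primalAveragingStep, sub_right_comm x, sum_add_distrib,
      sum_const, card_univ, nsmul_eq_mul, ← mul_sum, z]
    push_cast
    field_simp
  have hgain := hconv.le_inner_gradient_averagingPoint (hgrad z) xstar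
  have hnoise : (Fintype.card ι : ℝ)⁻¹ * (∑ j, ‖G z j‖ ^ 2) / c ≤ f z - f xstar :=
    (div_le_iff₀ hc).2 (by linarith [hwg z])
  rw [hmean, average_norm_sub_smul_sq (x - xstar) (f' z) (hunbiased z)]
  simp only [primalAveragingPotential]
  have : c * ((1 / c) ^ 2 * ((Fintype.card ι : ℝ)⁻¹ * ∑ j, ‖G z j‖ ^ 2))
      = (Fintype.card ι : ℝ)⁻¹ * (∑ j, ‖G z j‖ ^ 2) / c := by field_simp
  have : c * (2 * (1 / c) * ⟪f' z, x - xstar⟫) = 2 * ⟪f' z, x - xstar⟫ := by field_simp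
  linarith

end PrimalAveraging

theorem weak_growth_primal_averaging_rate_general {d n N : ℕ} (hn : 0 < n) (hN : 1 ≤ N)
    (L ρ : ℝ) (hL : 0 < L) (hρ : 1 ≤ ρ)
    (f : EuclideanSpace ℝ (Fin d) → ℝ)
    (f' : EuclideanSpace ℝ (Fin d) → EuclideanSpace ℝ (Fin d))
    (hgrad : ∀ x, HasGradientAt f (f' x) x)
    (hconv : ConvexOn ℝ Set.univ f)
    (xstar : EuclideanSpace ℝ (Fin d))
    (G : EuclideanSpace ℝ (Fin d) → Fin n → EuclideanSpace ℝ (Fin d))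
    (hunbiased : ∀ x, (n : ℝ)⁻¹ • (∑ i, G x i) = f' x)
    (hwg : ∀ x, (n : ℝ)⁻¹ * (∑ i, ‖G x i‖ ^ 2) ≤ 2 * ρ * L * (f x - f xstar))
    (x0 : EuclideanSpace ℝ (Fin d))
    (x y : (Fin N → Fin n) → ℕ → EuclideanSpace ℝ (Fin d))
    (hx0 : ∀ ω, x ω 0 = x0) (hy0 : ∀ ω, y ω 0 = x0)
    (hystep : ∀ ω (k : Fin N),
      y ω (k.val + 1) = ((k.val : ℝ) / ((k.val : ℝ) + 2)) • y ω k.val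
        + (2 / ((k.val : ℝ) + 2)) • x ω k.val)
    (hxstep : ∀ ω (k : Fin N),
      x ω (k.val + 1) = x ω k.val - (1 / (2 * ρ * L)) • G (y ω (k.val + 1)) (ω k)) :
    ((n : ℝ) ^ N)⁻¹ * (∑ ω : Fin N → Fin n, f (y ω N)) - f xstar
      ≤ 2 * ρ * L * ‖x0 - xstar‖ ^ 2 / (N : ℝ) := by
  have hc : 0 < 2 * ρ * L := mul_pos (mul_pos two_pos (by linarith)) hL
  have : Nonempty (Fin n) := ⟨⟨0, hn⟩⟩
  set u : (Fin N → Fin n) → ℕ → EuclideanSpace ℝ (Fin d) × EuclideanSpace ℝ (Fin d) :=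
    fun ω k => (x ω k, y ω k)
  have hu : IsStochasticIteration (primalAveragingStep G (2 * ρ * L)) u := fun ω k => by
    simp only [u, primalAveragingStep, averagingPoint, ← hystep, hxstep]
  have h0 : ∀ ω ω', u ω 0 = u ω' 0 := by simp [u, hx0, hy0]
  have hstep := primalAveragingPotential_step (G := G) (xstar := xstar) hgrad hconv
    (by simpa using hunbiased) hc (by simpa using hwg)
  have hpot := hu.sum_potential_le_initial h0 _ fun k _ s => hstep k s
  have hbound : (N : ℝ) * ∑ ω, (f (y ω N) - f xstar)
      ≤ (n : ℝ) ^ N * (2 * ρ * L * ‖x0 - xstar‖ ^ 2) :=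
    calc _ ≤ ∑ ω, primalAveragingPotential f xstar (2 * ρ * L) N (u ω N) := by
          rw [mul_sum]; exact sum_le_sum fun ω _ => le_add_of_nonneg_right (by positivity)
      _ ≤ ∑ ω, primalAveragingPotential f xstar (2 * ρ * L) 0 (u ω 0) := hpot
      _ = _ := by simp [primalAveragingPotential, u, hx0]
  have hNpos : (0 : ℝ) < N := by exact_mod_cast hN
  calc ((n : ℝ) ^ N)⁻¹ * (∑ ω : Fin N → Fin n, f (y ω N)) - f xstar
      = ((n : ℝ) ^ N)⁻¹ * ∑ ω, (f (y ω N) - f xstar) := by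
        simp only [sum_sub_distrib, sum_const, card_univ, Fintype.card_pi, Fintype.card_fin,
          prod_const, nsmul_eq_mul, Nat.cast_pow]
        field_simp
    _ ≤ ((n : ℝ) ^ N)⁻¹ * ((n : ℝ) ^ N * (2 * ρ * L * ‖x0 - xstar‖ ^ 2) / N) := by
        gcongr; rw [le_div_iff₀ hNpos]; linarith
    _ = 2 * ρ * L * ‖x0 - xstar‖ ^ 2 / (N : ℝ) := by field_simp

/-- Telescoped rate under the weak growth condition:
`E f(y_N) - f⋆ ≤ 2ρL‖x0 - x⋆‖²/N`. -/
theorem weak_growth_primal_averaging_rate {d n N : ℕ} (hn : 0 < n) (hN : 1 ≤ N)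
    (L ρ : ℝ) (hL : 0 < L) (hρ : 1 ≤ ρ)
    (f : EuclideanSpace ℝ (Fin d) → ℝ)
    (f' : EuclideanSpace ℝ (Fin d) → EuclideanSpace ℝ (Fin d))
    (hgrad : ∀ x, HasGradientAt f (f' x) x)
    (hconv : ConvexOn ℝ Set.univ f)
    (hsmooth : ∀ x y, ‖f' x - f' y‖ ≤ L * ‖x - y‖)
    (xstar : EuclideanSpace ℝ (Fin d)) (hmin : ∀ y, f xstar ≤ f y)
    (G : EuclideanSpace ℝ (Fin d) → Fin n → EuclideanSpace ℝ (Fin d))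
    (hunbiased : ∀ x, (n : ℝ)⁻¹ • (∑ i, G x i) = f' x)
    (hwg : ∀ x, (n : ℝ)⁻¹ * (∑ i, ‖G x i‖ ^ 2) ≤ 2 * ρ * L * (f x - f xstar))
    (x0 : EuclideanSpace ℝ (Fin d))
    (x y : (Fin N → Fin n) → ℕ → EuclideanSpace ℝ (Fin d))
    (hx0 : ∀ ω, x ω 0 = x0) (hy0 : ∀ ω, y ω 0 = x0)
    (hystep : ∀ ω (k : Fin N),
      y ω (k.val + 1) = ((k.val : ℝ) / ((k.val : ℝ) + 2)) • y ω k.val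
        + (2 / ((k.val : ℝ) + 2)) • x ω k.val)
    (hxstep : ∀ ω (k : Fin N),
      x ω (k.val + 1) = x ω k.val - (1 / (2 * ρ * L)) • G (y ω (k.val + 1)) (ω k)) :
    ((n : ℝ) ^ N)⁻¹ * (∑ ω : Fin N → Fin n, f (y ω N)) - f xstar
      ≤ 2 * ρ * L * ‖x0 - xstar‖ ^ 2 / (N : ℝ) :=
  weak_growth_primal_averaging_rate_general hn hN L ρ hL hρ f f' hgrad hconv xstar G hunbiased hwg
    x0 x y hx0 hy0 hystep hxstep
end

section
/- Let f : ℝ^d → ℝ be L-smooth convex with minimizer x⋆, with coordinates partitioned into n blocks via orthogonal projections U_1, …, U_n summing to the identity. Consider randomized block-coordinate descent x_{k+1} = x_k - δ_k U_{i_k} f'(x_k) with i_k uniform on {1,…,n} and 0 ≤ δ_k ≤ 1/L. Then for any d_k ≥ 1, with d_{k+1} = d_k + δ_k L/n, the potential φ_k = d_k (f(x_k) - f⋆) + (L/2)‖x_k - x⋆‖² satisfies E_{i_k} φ_{k+1} ≤ φ_k. -/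
/-!
Write `g = f'(x)`. The descent lemma bounds each `f(x - δ Uᵢ g)` by
`f(x) - δ ⟪g, Uᵢ g⟫ + L δ² ‖Uᵢ g‖² / 2`, and since the blocks sum to the identity and satisfy
Pythagoras, averaging over `i` gives `f(x) - δ (1 - L δ / 2) ‖g‖² / n`; the squared distance to `x⋆`
averages to `‖x - x⋆‖² - 2 δ ⟪g, x - x⋆⟫ / n + δ² ‖g‖² / n`. In the potential, the cross term
`-L δ ⟪g, x - x⋆⟫ / n` absorbs the extra weight `δ L / n` on `f(x) - f⋆` by the convexity bound
`f(x) - f⋆ ≤ ⟪g, x - x⋆⟫`, and the `‖g‖²` terms have a nonpositive total because `δ L ≤ 1 ≤ d_k`.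
-/

open Finset

section Gradient

variable {E : Type*} [NormedAddCommGroup E] [InnerProductSpace ℝ E] [CompleteSpace E]
  {f : E → ℝ}

theorem HasGradientAt.hasDerivAt_add_smul {g x v : E} {t : ℝ}
    (h : HasGradientAt f g (x + t • v)) :
    HasDerivAt (fun s : ℝ => f (x + s • v)) (inner ℝ g v) t := by
  have hline : HasDerivAt (fun s : ℝ => x + s • v) v t := by
    simpa using ((hasDerivAt_id t).smul_const v).const_add x
  simpa [Function.comp_def] using h.hasFDerivAt.comp_hasDerivAt t hline

theorem ConvexOn.inner_gradient_le_sub (hconv : ConvexOn ℝ Set.univ f) {g x : E}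
    (hgrad : HasGradientAt f g x) (y : E) :
    inner ℝ g (y - x) ≤ f y - f x := by
  have hline : ConvexOn ℝ Set.univ fun s : ℝ => f (x + s • (y - x)) := by
    simpa [Function.comp_def] using
      hconv.comp_affineMap (AffineMap.lineMap (k := ℝ) x y) |>.congr (fun s _ => by
        simp [AffineMap.lineMap_apply, add_comm])
  have hderiv : HasDerivAt (fun s : ℝ => f (x + s • (y - x))) (inner ℝ g (y - x)) 0 :=
    HasGradientAt.hasDerivAt_add_smul (by simpa using hgrad)
  simpa [slope_def_field] using
    hline.le_slope_of_hasDerivAt (Set.mem_univ 0) (Set.mem_univ 1) one_pos hderiv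

theorem le_add_inner_add_of_lipschitz_gradient {f' : E → E}
    (hgrad : ∀ x, HasGradientAt f (f' x) x) {L : ℝ}
    (hsmooth : ∀ x y, ‖f' x - f' y‖ ≤ L * ‖x - y‖) (x v : E) :
    f (x + v) ≤ f x + inner ℝ (f' x) v + L / 2 * ‖v‖ ^ 2 := by
  have hφ : ∀ t, HasDerivAt (fun s : ℝ => f (x + s • v)) (inner ℝ (f' (x + t • v)) v) t :=
    fun t => (hgrad _).hasDerivAt_add_smul
  have hB : ∀ t : ℝ,
      HasDerivAt (fun s : ℝ => f x + s * inner ℝ (f' x) v + L / 2 * s ^ 2 * ‖v‖ ^ 2)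
      (inner ℝ (f' x) v + L * t * ‖v‖ ^ 2) t := by
    intro t
    refine ((((hasDerivAt_id t).mul_const (inner ℝ (f' x) v)).const_add (f x)).add
      (((hasDerivAt_pow 2 t).const_mul (L / 2)).mul_const (‖v‖ ^ 2))).congr_deriv ?_
    simp only [Nat.cast_ofNat]
    ring
  have hbound : ∀ t ∈ Set.Ico (0 : ℝ) 1,
      inner ℝ (f' (x + t • v)) v ≤ inner ℝ (f' x) v + L * t * ‖v‖ ^ 2 := by
    rintro t ⟨ht, -⟩
    have hlip : ‖f' (x + t • v) - f' x‖ ≤ L * (t * ‖v‖) := by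
      simpa [norm_smul, abs_of_nonneg ht] using hsmooth (x + t • v) x
    have := real_inner_le_norm (f' (x + t • v) - f' x) v
    rw [inner_sub_left] at this
    nlinarith [norm_nonneg v]
  simpa using image_le_of_deriv_right_le_deriv_boundary
    (fun t _ => (hφ t).continuousAt.continuousWithinAt)
    (fun t _ => (hφ t).hasDerivWithinAt) (by simp)
    (fun t _ => (hB t).continuousAt.continuousWithinAt)
    (fun t _ => (hB t).hasDerivWithinAt) hbound (Set.right_mem_Icc.2 zero_le_one)

end Gradient

section Blocks

variable {E ι : Type*} [NormedAddCommGroup E] [InnerProductSpace ℝ E] [Fintype ι]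
  {g : E} {v : ι → E}

theorem sum_norm_sub_smul_sq (hsum : ∑ i, v i = g) (hpyth : ∑ i, ‖v i‖ ^ 2 = ‖g‖ ^ 2)
    (r : E) (δ : ℝ) :
    ∑ i, ‖r - δ • v i‖ ^ 2
      = Fintype.card ι * ‖r‖ ^ 2 - 2 * δ * inner ℝ r g + δ ^ 2 * ‖g‖ ^ 2 := by
  simp only [norm_sub_sq_real, inner_smul_right, norm_smul, mul_pow, Real.norm_eq_abs, sq_abs,
    sum_add_distrib, sum_sub_distrib, ← mul_sum, ← inner_sum, hsum, hpyth, sum_const, card_univ,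
    nsmul_eq_mul]
  ring

theorem sum_apply_sub_smul_le_of_lipschitz_gradient [CompleteSpace E] {f : E → ℝ} {f' : E → E}
    (hgrad : ∀ x, HasGradientAt f (f' x) x) {L : ℝ}
    (hsmooth : ∀ x y, ‖f' x - f' y‖ ≤ L * ‖x - y‖) (x : E)
    (hsum : ∑ i, v i = f' x) (hpyth : ∑ i, ‖v i‖ ^ 2 = ‖f' x‖ ^ 2) (δ : ℝ) :
    ∑ i, f (x - δ • v i) ≤ Fintype.card ι * f x - δ * (1 - L * δ / 2) * ‖f' x‖ ^ 2 := by
  calc ∑ i, f (x - δ • v i)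
      ≤ ∑ i, (f x - δ * inner ℝ (f' x) (v i) + L / 2 * δ ^ 2 * ‖v i‖ ^ 2) := by
        refine sum_le_sum fun i _ => ?_
        have := le_add_inner_add_of_lipschitz_gradient hgrad hsmooth x (-(δ • v i))
        simpa [← sub_eq_add_neg, inner_smul_right, norm_smul, mul_pow, sub_eq_add_neg,
          mul_assoc] using this
    _ = Fintype.card ι * f x - δ * (1 - L * δ / 2) * ‖f' x‖ ^ 2 := by
        simp only [sum_add_distrib, sum_sub_distrib, ← mul_sum, ← inner_sum, hsum, hpyth,
          sum_const, card_univ, nsmul_eq_mul, real_inner_self_eq_norm_sq]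
        ring

end Blocks

theorem block_coordinate_descent_potential_general {d n : ℕ} (hn : 0 < n)
    (L : ℝ) (hL : 0 < L)
    (f : EuclideanSpace ℝ (Fin d) → ℝ)
    (f' : EuclideanSpace ℝ (Fin d) → EuclideanSpace ℝ (Fin d))
    (hgrad : ∀ x, HasGradientAt f (f' x) x)
    (hconv : ConvexOn ℝ Set.univ f)
    (hsmooth : ∀ x y, ‖f' x - f' y‖ ≤ L * ‖x - y‖)
    (xstar : EuclideanSpace ℝ (Fin d))
    (U : Fin n → EuclideanSpace ℝ (Fin d) →L[ℝ] EuclideanSpace ℝ (Fin d))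
    (hUsum : ∀ x, ∑ i, U i x = x)
    (hUpyth : ∀ x, ∑ i, ‖U i x‖ ^ 2 = ‖x‖ ^ 2)
    (δ dk : ℝ) (hδ0 : 0 ≤ δ) (hδ1 : δ ≤ 1 / L) (hdk : 1 ≤ dk)
    (xk : EuclideanSpace ℝ (Fin d))
    (x1 : Fin n → EuclideanSpace ℝ (Fin d))
    (hx1 : ∀ i, x1 i = xk - δ • U i (f' xk)) :
    (n : ℝ)⁻¹ * (∑ i, ((dk + δ * L / (n : ℝ)) * (f (x1 i) - f xstar)
        + L / 2 * ‖x1 i - xstar‖ ^ 2))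
      ≤ dk * (f xk - f xstar) + L / 2 * ‖xk - xstar‖ ^ 2 := by
  obtain rfl : x1 = fun i => xk - δ • U i (f' xk) := funext hx1
  have hn' : (0 : ℝ) < n := by exact_mod_cast hn
  have hδL : δ * L ≤ 1 := (le_div_iff₀ hL).1 (by simpa using hδ1)
  have hgap : f xk - f xstar ≤ inner ℝ (xk - xstar) (f' xk) := by
    have := hconv.inner_gradient_le_sub (hgrad xk) xstar
    rw [← neg_sub, inner_neg_right, real_inner_comm] at this
    linarith
  have hf := sum_apply_sub_smul_le_of_lipschitz_gradient hgrad hsmooth xk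
    (v := fun i => U i (f' xk)) (hUsum _) (hUpyth _) δ
  have hr := sum_norm_sub_smul_sq (v := fun i => U i (f' xk)) (hUsum _) (hUpyth _) (xk - xstar) δ
  simp only [Fintype.card_fin] at hf hr
  simp_rw [sub_right_comm xk _ xstar]
  rw [inv_mul_le_iff₀ hn', sum_add_distrib, ← mul_sum, ← mul_sum, sum_sub_distrib, sum_const,
    card_univ, Fintype.card_fin, nsmul_eq_mul, hr]
  set c := dk + δ * L / n
  have hcn : c * n = dk * n + δ * L := by rw [add_mul, div_mul_cancel₀ _ hn'.ne']
  have hc : 1 ≤ c := le_add_of_le_of_nonneg hdk (by positivity)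
  have hGweight : δ * L / 2 ≤ c * (1 - L * δ / 2) := by nlinarith
  linarith [mul_le_mul_of_nonneg_left hf (zero_le_one.trans hc),
    mul_le_mul_of_nonneg_left hgap (mul_nonneg hδ0 hL.le),
    mul_le_mul_of_nonneg_left hGweight (mul_nonneg hδ0 (sq_nonneg ‖f' xk‖)),
    congrArg (· * (f xk - f xstar)) hcn]

/-- One-step potential inequality for randomized block-coordinate descent on a
smooth convex function. The `U i` are the projections onto complementary
coordinate blocks, so that they sum to the identity and Pythagoras holds. -/
theorem block_coordinate_descent_potential {d n : ℕ} (hn : 0 < n)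
    (L : ℝ) (hL : 0 < L)
    (f : EuclideanSpace ℝ (Fin d) → ℝ)
    (f' : EuclideanSpace ℝ (Fin d) → EuclideanSpace ℝ (Fin d))
    (hgrad : ∀ x, HasGradientAt f (f' x) x)
    (hconv : ConvexOn ℝ Set.univ f)
    (hsmooth : ∀ x y, ‖f' x - f' y‖ ≤ L * ‖x - y‖)
    (xstar : EuclideanSpace ℝ (Fin d)) (hmin : ∀ y, f xstar ≤ f y)
    (U : Fin n → EuclideanSpace ℝ (Fin d) →L[ℝ] EuclideanSpace ℝ (Fin d))
    (hUproj : ∀ i x, U i (U i x) = U i x)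
    (hUsum : ∀ x, ∑ i, U i x = x)
    (hUpyth : ∀ x, ∑ i, ‖U i x‖ ^ 2 = ‖x‖ ^ 2)
    (δ dk : ℝ) (hδ0 : 0 ≤ δ) (hδ1 : δ ≤ 1 / L) (hdk : 1 ≤ dk)
    (xk : EuclideanSpace ℝ (Fin d))
    (x1 : Fin n → EuclideanSpace ℝ (Fin d))
    (hx1 : ∀ i, x1 i = xk - δ • U i (f' xk)) :
    (n : ℝ)⁻¹ * (∑ i, ((dk + δ * L / (n : ℝ)) * (f (x1 i) - f xstar)
        + L / 2 * ‖x1 i - xstar‖ ^ 2))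
      ≤ dk * (f xk - f xstar) + L / 2 * ‖xk - xstar‖ ^ 2 :=
  block_coordinate_descent_potential_general hn L hL f f' hgrad hconv hsmooth xstar U hUsum hUpyth δ
    dk hδ0 hδ1 hdk xk x1 hx1
end
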